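/- arXiv:2601.19791 — 3 statements merged into one kernel-verified Lean document; each statement's English description precedes it below -/
import Mathlib

section
/- Suppose the labels are zero (zero teacher, y_i = 0 for all i), m > n, 0 < ηλ < 1, and the initialization θ^{(0)} is drawn from the Gaussian measure N(0, ν²I_m) on ℝ^m with ν² > 0. Then with probability at least 1 − 2·e^{−(m−n)/32} over θ^{(0)}, the gradient-descent iterates satisfy, for every t ∈ ℕ, L(θ^{(t)}) ≥ λ_min(Σ)·(1 − ηλ)^{2t}·(m − n)·ν²/2. -/
open MeasureTheory ProbabilityTheory Finset Filter
open scoped RealInnerProductSpace NNReal ENNReal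

noncomputable section

/-- One gradient-descent step on the ridge objective `L_n(θ;λ)`:
`θ ↦ θ − η•∇L_n(θ;λ)`, where `∇L_n(θ;λ) = (1/n)∑ᵢ(⟨θ,φᵢ⟩−yᵢ)•φᵢ + λ•θ`. -/
def gdStep (m n : ℕ) (φ : Fin n → EuclideanSpace ℝ (Fin m)) (y : Fin n → ℝ)
    (η lam : ℝ) (θ : EuclideanSpace ℝ (Fin m)) : EuclideanSpace ℝ (Fin m) :=
  θ - η • ((n : ℝ)⁻¹ • ∑ i, (⟪θ, φ i⟫ - y i) • φ i + lam • θ)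

/-- Gradient-descent iterates `θ^{(t)}` started at `θ0`. -/
def gdIter (m n : ℕ) (φ : Fin n → EuclideanSpace ℝ (Fin m)) (y : Fin n → ℝ)
    (η lam : ℝ) (θ0 : EuclideanSpace ℝ (Fin m)) : ℕ → EuclideanSpace ℝ (Fin m)
  | 0 => θ0
  | t + 1 => gdStep m n φ y η lam (gdIter m n φ y η lam θ0 t)

/-- The unregularized training loss `L_n(θ) = (1/(2n)) ∑ᵢ (⟨θ,φᵢ⟩ − yᵢ)²`. -/
def trainLoss (m n : ℕ) (φ : Fin n → EuclideanSpace ℝ (Fin m)) (y : Fin n → ℝ)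
    (θ : EuclideanSpace ℝ (Fin m)) : ℝ :=
  (1 / (2 * n) : ℝ) * ∑ i, (⟪θ, φ i⟫ - y i) ^ 2

/-- The ridge objective `L_n(θ;λ) = L_n(θ) + (λ/2)‖θ‖²`. -/
def ridgeObj (m n : ℕ) (φ : Fin n → EuclideanSpace ℝ (Fin m)) (y : Fin n → ℝ)
    (lam : ℝ) (θ : EuclideanSpace ℝ (Fin m)) : ℝ :=
  trainLoss m n φ y θ + (lam / 2) * ‖θ‖ ^ 2

/-- The average squared feature norm `L = (1/n) ∑ᵢ ‖φᵢ‖²`. -/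
def featNormAvg (m n : ℕ) (φ : Fin n → EuclideanSpace ℝ (Fin m)) : ℝ :=
  (1 / n : ℝ) * ∑ i, ‖φ i‖ ^ 2

/-- The Gaussian measure `N(0, v·I_m)` on `ℝ^m` (`v` stands for the variance `ν²`),
realized as the product of `m` i.i.d. real Gaussians `N(0, v)`. -/
def stdGaussian (m : ℕ) (v : ℝ≥0) : Measure (EuclideanSpace ℝ (Fin m)) :=
  (Measure.pi fun _ : Fin m => gaussianReal 0 v).map
    (EuclideanSpace.equiv (Fin m) ℝ).symm

/-- The smallest strictly positive eigenvalue `λ_min⁺(Φ^⊤Φ)` of the Gram matrix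
`Φ^⊤Φ = ∑ᵢ φᵢφᵢ^⊤`, viewed as the operator `w ↦ ∑ᵢ ⟨w,φᵢ⟩•φᵢ` on `ℝ^m`. -/
def lamMinPosOf (m n : ℕ) (φ : Fin n → EuclideanSpace ℝ (Fin m)) : ℝ :=
  sInf {μ : ℝ | 0 < μ ∧ ∃ w : EuclideanSpace ℝ (Fin m), w ≠ 0 ∧
    ∑ i, ⟪w, φ i⟫ • φ i = μ • w}

/-- The population squared loss `L(θ) = E_{x∼D}[⟨θ − θ*, φ(x)⟩²]`. -/
def popLoss (d m : ℕ) (D : Measure (EuclideanSpace ℝ (Fin d)))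
    (φmap : EuclideanSpace ℝ (Fin d) → EuclideanSpace ℝ (Fin m))
    (θstar θ : EuclideanSpace ℝ (Fin m)) : ℝ :=
  ∫ x, (⟪θ - θstar, φmap x⟫) ^ 2 ∂D

/-!
Let `W` be the orthogonal complement of the span of the `n` training features, so
`dim W ≥ m - n`. With zero labels every gradient lies in `span φᵢ + ℝθ`, hence gradient descent
acts on `W` as multiplication by `1 - ηλ`: the projection of `θ^{(t)}` onto `W` is
`(1 - ηλ)^t` times that of `θ^{(0)}`, and `L(θ) ≥ λ_min(Σ)‖θ‖²`. It remains to see that the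
projection of a Gaussian initialization onto `W` is rarely short: it is a standard Gaussian on `W`
(scaled by `ν`), and a Chernoff bound with `E[exp(-‖X‖²/2)] = 2^{-dim W / 2}` gives
`P(‖X‖² ≤ (dim W) / 2) ≤ exp((1/4 - log 2 / 2) dim W) ≤ exp(-(dim W) / 32)`.
-/

open Real

lemma integral_exp_neg_half_sq_gaussianReal :
    ∫ y, exp (-1 / 2 * y ^ 2) ∂gaussianReal 0 1 = (√2)⁻¹ := by
  rw [integral_gaussianReal_eq_integral_smul one_ne_zero]
  have h (y : ℝ) :
      gaussianPDFReal 0 1 y • exp (-1 / 2 * y ^ 2) = (√(2 * π))⁻¹ * exp (-1 * y ^ 2) := by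
    simp only [gaussianPDFReal, sub_zero, NNReal.coe_one, mul_one, smul_eq_mul]
    rw [mul_assoc, ← exp_add]
    ring_nf
  simp_rw [h]
  rw [integral_const_mul, integral_gaussian, div_one, sqrt_mul zero_le_two, mul_inv,
    mul_assoc, inv_mul_cancel₀ (by positivity), mul_one]

lemma gaussianReal_zero_eq_map_sqrt_mul (v : ℝ≥0) :
    gaussianReal 0 v = (gaussianReal 0 1).map (fun y => √(v : ℝ) * y) := by
  rw [gaussianReal_map_const_mul, mul_zero, mul_one]
  congr
  ext
  simp

namespace ProbabilityTheory

variable {E : Type*} [NormedAddCommGroup E] [InnerProductSpace ℝ E] [FiniteDimensional ℝ E]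
  [MeasurableSpace E] [BorelSpace E]

lemma stdGaussian_map_orthogonalProjectionOnto (K : Submodule ℝ E) :
    (stdGaussian E).map K.orthogonalProjectionOnto = stdGaussian K := by
  refine Measure.ext_of_charFunDual (funext fun L => ?_)
  have hnorm : ‖L.comp K.orthogonalProjectionOnto‖ = ‖L‖ := by
    refine le_antisymm ?_ ?_
    · simpa using L.opNorm_comp_le K.orthogonalProjectionOnto |>.trans
        (mul_le_of_le_one_right (norm_nonneg L) K.orthogonalProjectionOnto_norm_le)
    · have hL : L = (L.comp K.orthogonalProjectionOnto).comp K.subtypeL := by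
        ext x
        simp
      calc ‖L‖ ≤ ‖L.comp K.orthogonalProjectionOnto‖ * ‖K.subtypeL‖ := by
            conv_lhs => rw [hL]
            exact ContinuousLinearMap.opNorm_comp_le _ _
        _ ≤ ‖L.comp K.orthogonalProjectionOnto‖ :=
            mul_le_of_le_one_right (norm_nonneg _) (Submodule.norm_subtypeL_le K)
  rw [charFunDual_map, charFunDual_stdGaussian, charFunDual_stdGaussian, hnorm]

lemma mgf_norm_sq_stdGaussian_neg_half :
    mgf (fun x => ‖x‖ ^ 2) (stdGaussian E) (-1 / 2) = (√2)⁻¹ ^ Module.finrank ℝ E := by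
  rw [mgf, stdGaussian, integral_map (Measurable.aemeasurable (by fun_prop)) (by fun_prop)]
  set b := stdOrthonormalBasis ℝ E
  have hnorm (x : Fin (Module.finrank ℝ E) → ℝ) : ‖∑ i, x i • b i‖ ^ 2 = ∑ i, x i ^ 2 := by
    rw [show ∑ i, x i • b i = b.repr.symm (WithLp.toLp 2 x) from b.sum_repr_symm _,
      b.repr.symm.norm_map, EuclideanSpace.real_norm_sq_eq]
  simp_rw [hnorm, Finset.mul_sum, exp_sum]
  rw [integral_fintype_prod_eq_prod (f := fun _ y => exp (-1 / 2 * y ^ 2)),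
    integral_exp_neg_half_sq_gaussianReal, Finset.prod_const, Finset.card_univ, Fintype.card_fin]

lemma stdGaussian_real_norm_sq_le_half_finrank_le_exp :
    (stdGaussian E).real {x | ‖x‖ ^ 2 ≤ Module.finrank ℝ E / 2} ≤
      exp (-(Module.finrank ℝ E) / 32) := by
  set r : ℝ := (Module.finrank ℝ E : ℝ)
  have hint : Integrable (fun x : E => exp (-1 / 2 * ‖x‖ ^ 2)) (stdGaussian E) :=
    Integrable.of_bound (by fun_prop) 1 (Eventually.of_forall fun x => by
      rw [norm_of_nonneg (exp_nonneg _), exp_le_one_iff]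
      nlinarith [sq_nonneg ‖x‖])
  refine (measure_le_le_exp_mul_mgf _ (by norm_num) hint).trans ?_
  have hpow : (√2)⁻¹ ^ Module.finrank ℝ E = exp (-(r * (log 2 / 2))) := by
    rw [← exp_log (by positivity : (0 : ℝ) < (√2)⁻¹), ← exp_nat_mul, log_inv,
      log_sqrt zero_le_two, mul_neg]
  rw [mgf_norm_sq_stdGaussian_neg_half, hpow, ← exp_add, exp_le_exp]
  nlinarith [log_two_gt_d9, (Nat.cast_nonneg _ : (0 : ℝ) ≤ r)]

lemma stdGaussian_norm_sq_orthogonalProjectionOnto_lt_le_exp (W : Submodule ℝ E) {k : ℕ}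
    (hk : k ≤ Module.finrank ℝ W) :
    stdGaussian E {x | ‖W.orthogonalProjectionOnto x‖ ^ 2 < k / 2} ≤
      ENNReal.ofReal (exp (-k / 32)) := by
  have hk' : (k : ℝ) ≤ Module.finrank ℝ W := by exact_mod_cast hk
  calc stdGaussian E {x | ‖W.orthogonalProjectionOnto x‖ ^ 2 < k / 2}
      = stdGaussian W {w | ‖w‖ ^ 2 < k / 2} := by
        rw [← stdGaussian_map_orthogonalProjectionOnto W,
          Measure.map_apply (by fun_prop) (measurableSet_lt (by fun_prop) measurable_const)]
        rfl
    _ ≤ stdGaussian W {w | ‖w‖ ^ 2 ≤ Module.finrank ℝ W / 2} :=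
        measure_mono fun w (hw : ‖w‖ ^ 2 < k / 2) =>
          show ‖w‖ ^ 2 ≤ Module.finrank ℝ W / 2 by linarith
    _ = ENNReal.ofReal ((stdGaussian W).real {w | ‖w‖ ^ 2 ≤ Module.finrank ℝ W / 2}) :=
        (ofReal_measureReal (measure_ne_top _ _)).symm
    _ ≤ ENNReal.ofReal (exp (-k / 32)) := by
        refine ENNReal.ofReal_le_ofReal (stdGaussian_real_norm_sq_le_half_finrank_le_exp.trans ?_)
        gcongr

end ProbabilityTheory

lemma stdGaussian_eq_map_smul (m : ℕ) (v : ℝ≥0) :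
    _root_.stdGaussian m v =
      (ProbabilityTheory.stdGaussian (EuclideanSpace ℝ (Fin m))).map (fun x => √(v : ℝ) • x) := by
  rw [_root_.stdGaussian, ← map_pi_eq_stdGaussian, Measure.map_map (by fun_prop) (by fun_prop)]
  simp_rw [gaussianReal_zero_eq_map_sqrt_mul v]
  rw [← Measure.pi_map_pi (fun _ => (by fun_prop : Measurable _).aemeasurable),
    Measure.map_map (by fun_prop) (by fun_prop)]
  rfl

instance (m : ℕ) (v : ℝ≥0) : IsProbabilityMeasure (_root_.stdGaussian m v) := by
  rw [stdGaussian_eq_map_smul]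
  exact Measure.isProbabilityMeasure_map (by fun_prop)

lemma stdGaussian_norm_sq_orthogonalProjectionOnto_lt_mul_le_exp {m : ℕ} {v : ℝ≥0} (hv : 0 < v)
    (W : Submodule ℝ (EuclideanSpace ℝ (Fin m))) {k : ℕ} (hk : k ≤ Module.finrank ℝ W) :
    _root_.stdGaussian m v {θ | ‖W.orthogonalProjectionOnto θ‖ ^ 2 < k * v / 2} ≤
      ENNReal.ofReal (exp (-k / 32)) := by
  have hv' : (0 : ℝ) < v := hv
  rw [stdGaussian_eq_map_smul,
    Measure.map_apply (by fun_prop) (measurableSet_lt (by fun_prop) measurable_const)]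
  convert ProbabilityTheory.stdGaussian_norm_sq_orthogonalProjectionOnto_lt_le_exp W hk using 3
  ext x
  simp only [Set.mem_preimage, Set.mem_ofPred_eq, map_smul, norm_smul, mul_pow, norm_eq_abs,
    sq_abs, sq_sqrt hv'.le]
  constructor <;> intro h <;> nlinarith

lemma sub_card_le_finrank_orthogonal_span_range {E ι : Type*} [NormedAddCommGroup E]
    [InnerProductSpace ℝ E] [FiniteDimensional ℝ E] [Fintype ι] (φ : ι → E) :
    Module.finrank ℝ E - Fintype.card ι ≤
      Module.finrank ℝ (Submodule.span ℝ (Set.range φ))ᗮ := by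
  have := (Submodule.span ℝ (Set.range φ)).finrank_add_finrank_orthogonal
  have := finrank_range_le_card (R := ℝ) φ
  unfold Set.finrank at this
  omega

section GradientDescent

variable {m n : ℕ} (φ : Fin n → EuclideanSpace ℝ (Fin m)) (η lam : ℝ)
  (θ0 : EuclideanSpace ℝ (Fin m)) (t : ℕ)

lemma orthogonalProjectionOnto_gdIter_zero_labels :
    (Submodule.span ℝ (Set.range φ))ᗮ.orthogonalProjectionOnto
        (gdIter m n φ (fun _ => 0) η lam θ0 t) =
      (1 - η * lam) ^ t • (Submodule.span ℝ (Set.range φ))ᗮ.orthogonalProjectionOnto θ0 := by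
  set P := (Submodule.span ℝ (Set.range φ))ᗮ.orthogonalProjectionOnto
  induction t with
  | zero => simp [gdIter]
  | succ t ih =>
    have hφ (i : Fin n) : P (φ i) = 0 :=
      Submodule.orthogonalProjectionOnto_orthogonal_apply_eq_zero
        (Submodule.subset_span (Set.mem_range_self i))
    simp only [gdIter, gdStep, map_sub, map_smul, map_add, map_sum, hφ, smul_zero,
      Finset.sum_const_zero, ih]
    module

lemma pow_mul_norm_sq_orthogonalProjectionOnto_le_norm_sq_gdIter :
    (1 - η * lam) ^ (2 * t) *
        ‖(Submodule.span ℝ (Set.range φ))ᗮ.orthogonalProjectionOnto θ0‖ ^ 2 ≤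
      ‖gdIter m n φ (fun _ => 0) η lam θ0 t‖ ^ 2 := by
  have h := (Submodule.span ℝ (Set.range φ))ᗮ.norm_orthogonalProjectionOnto_apply_le
    (gdIter m n φ (fun _ => 0) η lam θ0 t)
  rw [orthogonalProjectionOnto_gdIter_zero_labels, norm_smul, norm_eq_abs] at h
  rw [pow_mul', ← sq_abs (_ ^ t), ← mul_pow]
  exact pow_le_pow_left₀ (by positivity) h 2

end GradientDescent

open Matrix

lemma Matrix.IsHermitian.mul_dotProduct_self_le {ι : Type*} [Fintype ι] [DecidableEq ι]
    {A : Matrix ι ι ℝ} (hA : A.IsHermitian) {c : ℝ}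
    (hc : ∀ μ : ℝ, (∃ w : ι → ℝ, w ≠ 0 ∧ A *ᵥ w = μ • w) → c ≤ μ) (x : ι → ℝ) :
    c * (x ⬝ᵥ x) ≤ x ⬝ᵥ A *ᵥ x := by
  have hM : (A - c • 1).IsHermitian := hA.sub (isHermitian_one.smul (IsSelfAdjoint.all c))
  have hPSD : (A - c • 1).PosSemidef := hM.posSemidef_iff_eigenvalues_nonneg.2 fun i => by
    have hAv : A *ᵥ ⇑(hM.eigenvectorBasis i) =
        (hM.eigenvalues i + c) • ⇑(hM.eigenvectorBasis i) := by
      have := hM.mulVec_eigenvectorBasis i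
      rw [sub_mulVec, smul_mulVec, one_mulVec, sub_eq_iff_eq_add] at this
      rw [this, add_smul]
    have := hc _ ⟨_, (WithLp.ofLp_eq_zero 2).ne.2 (hM.eigenvectorBasis.orthonormal.ne_zero i), hAv⟩
    exact (le_add_iff_nonneg_left c).1 this
  have := hPSD.dotProduct_mulVec_nonneg x
  simp only [star_trivial, sub_mulVec, smul_mulVec, one_mulVec, dotProduct_sub,
    dotProduct_smul, smul_eq_mul] at this
  linarith

lemma Matrix.PosSemidef.nonneg_of_mulVec_eq_smul {ι : Type*} [Fintype ι] {A : Matrix ι ι ℝ}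
    (hA : A.PosSemidef) {μ : ℝ} {w : ι → ℝ} (hw : w ≠ 0) (h : A *ᵥ w = μ • w) : 0 ≤ μ := by
  have hpos : 0 < w ⬝ᵥ w := by simpa using dotProduct_star_self_pos_iff.2 hw
  have := hA.dotProduct_mulVec_nonneg w
  rw [h, star_trivial, dotProduct_smul, smul_eq_mul] at this
  exact nonneg_of_mul_nonneg_left this hpos

section SecondMoment

variable {α ι : Type*} [Fintype ι] [MeasurableSpace α] {μ : Measure α} {f : α → ι → ℝ}
  {S : Matrix ι ι ℝ} (hS : ∀ j k, S j k = ∫ x, f x j * f x k ∂μ)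
  (hf : ∀ j k, Integrable (fun x => f x j * f x k) μ)
include hS hf

lemma integral_sq_sum_mul_eq_dotProduct_mulVec (w : ι → ℝ) :
    ∫ x, (∑ j, w j * f x j) ^ 2 ∂μ = w ⬝ᵥ S *ᵥ w := by
  have hexpand (x : α) : (∑ j, w j * f x j) ^ 2 = ∑ j, ∑ k, w j * w k * (f x j * f x k) := by
    rw [sq, Finset.sum_mul_sum]
    exact Finset.sum_congr rfl fun j _ => Finset.sum_congr rfl fun k _ => by ring
  simp_rw [hexpand]
  rw [integral_finsetSum _ fun j _ => integrable_finsetSum _ fun k _ => (hf j k).const_mul _]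
  simp_rw [integral_finsetSum _ fun k _ => (hf _ k).const_mul _, integral_const_mul, ← hS]
  simp only [dotProduct, mulVec, Finset.mul_sum]
  exact Finset.sum_congr rfl fun j _ => Finset.sum_congr rfl fun k _ => by ring

lemma posSemidef_of_eq_integral_mul : S.PosSemidef := by
  refine .of_dotProduct_mulVec_nonneg (IsHermitian.ext fun j k => ?_) fun w => ?_
  · simp only [star_trivial, hS, mul_comm]
  · rw [star_trivial, ← integral_sq_sum_mul_eq_dotProduct_mulVec hS hf]
    exact integral_nonneg fun x => sq_nonneg _

end SecondMoment

lemma popLoss_zero_eq_dotProduct_mulVec {d m : ℕ} (D : Measure (EuclideanSpace ℝ (Fin d)))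
    (φmap : EuclideanSpace ℝ (Fin d) → EuclideanSpace ℝ (Fin m)) {S : Matrix (Fin m) (Fin m) ℝ}
    (hS : ∀ j k, S j k = ∫ x, φmap x j * φmap x k ∂D)
    (hf : ∀ j k, Integrable (fun x => φmap x j * φmap x k) D) (θ : EuclideanSpace ℝ (Fin m)) :
    popLoss d m D φmap 0 θ = θ.ofLp ⬝ᵥ S *ᵥ θ.ofLp := by
  rw [popLoss, ← integral_sq_sum_mul_eq_dotProduct_mulVec (f := fun x j => φmap x j) hS hf]
  simp [PiLp.inner_apply, mul_comm]

lemma mul_pow_mul_le_popLoss_gdIter {d m n : ℕ} (D : Measure (EuclideanSpace ℝ (Fin d)))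
    (φmap : EuclideanSpace ℝ (Fin d) → EuclideanSpace ℝ (Fin m)) {S : Matrix (Fin m) (Fin m) ℝ}
    (hS : ∀ j k, S j k = ∫ x, φmap x j * φmap x k ∂D)
    (hf : ∀ j k, Integrable (fun x => φmap x j * φmap x k) D) {c : ℝ} (hc : 0 ≤ c)
    (hcS : ∀ μ : ℝ, (∃ w : Fin m → ℝ, w ≠ 0 ∧ S *ᵥ w = μ • w) → c ≤ μ)
    (φ : Fin n → EuclideanSpace ℝ (Fin m)) (η lam : ℝ) (θ0 : EuclideanSpace ℝ (Fin m)) (t : ℕ) :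
    c * (1 - η * lam) ^ (2 * t) *
        ‖(Submodule.span ℝ (Set.range φ))ᗮ.orthogonalProjectionOnto θ0‖ ^ 2 ≤
      popLoss d m D φmap 0 (gdIter m n φ (fun _ => 0) η lam θ0 t) := by
  set θt := gdIter m n φ (fun _ => 0) η lam θ0 t
  calc c * (1 - η * lam) ^ (2 * t) *
        ‖(Submodule.span ℝ (Set.range φ))ᗮ.orthogonalProjectionOnto θ0‖ ^ 2
      ≤ c * (θt.ofLp ⬝ᵥ θt.ofLp) := by
        rw [mul_assoc, show θt.ofLp ⬝ᵥ θt.ofLp = ‖θt‖ ^ 2 from real_inner_self_eq_norm_sq θt]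
        gcongr
        exact pow_mul_norm_sq_orthogonalProjectionOnto_le_norm_sq_gdIter _ _ _ _ _
    _ ≤ popLoss d m D φmap 0 θt := by
        rw [popLoss_zero_eq_dotProduct_mulVec D φmap hS hf]
        exact (posSemidef_of_eq_integral_mul hS hf).isHermitian.mul_dotProduct_self_le hcS _

lemma ofReal_one_sub_le_measure_compl {α : Type*} [MeasurableSpace α] {μ : Measure α}
    [IsProbabilityMeasure μ] {s : Set α} (hs : MeasurableSet s) {ε : ℝ} (hε : 0 ≤ ε)
    (h : μ s ≤ ENNReal.ofReal ε) : ENNReal.ofReal (1 - ε) ≤ μ sᶜ := by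
  rw [prob_compl_eq_one_sub hs, ENNReal.ofReal_sub _ hε, ENNReal.ofReal_one]
  exact tsub_le_tsub_left h 1

theorem zero_teacher_population_loss_lower_bound_general (d n m : ℕ) (hmn : n < m)
    (D : Measure (EuclideanSpace ℝ (Fin d)))
    (φmap : EuclideanSpace ℝ (Fin d) → EuclideanSpace ℝ (Fin m))
    (xs : Fin n → EuclideanSpace ℝ (Fin d))
    (SigmaMat : Matrix (Fin m) (Fin m) ℝ)
    (hSigma : ∀ j k, SigmaMat j k = ∫ x, φmap x j * φmap x k ∂D)
    (hInt : ∀ j k : Fin m, Integrable (fun x => φmap x j * φmap x k) D)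
    (lamSigma : ℝ)
    (hSigmaeig : ∃ w : Fin m → ℝ, w ≠ 0 ∧ SigmaMat.mulVec w = lamSigma • w)
    (hSigmaleast : ∀ μ : ℝ, (∃ w : Fin m → ℝ, w ≠ 0 ∧ SigmaMat.mulVec w = μ • w) → lamSigma ≤ μ)
    (lam η : ℝ)
    (v : ℝ≥0) (hv : 0 < v) :
    ENNReal.ofReal (1 - 2 * Real.exp (-((m : ℝ) - n) / 32)) ≤
      stdGaussian m v
        {θ0 : EuclideanSpace ℝ (Fin m) | ∀ t : ℕ,
          lamSigma * (1 - η * lam) ^ (2 * t) * (((m : ℝ) - n) * v / 2) ≤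
            popLoss d m D φmap 0
              (gdIter m n (fun i => φmap (xs i)) (fun _ => 0) η lam θ0 t)} := by
  set W := (Submodule.span ℝ (Set.range fun i => φmap (xs i)))ᗮ
  have hdim : m - n ≤ Module.finrank ℝ W := by
    simpa using sub_card_le_finrank_orthogonal_span_range fun i => φmap (xs i)
  have hbad := stdGaussian_norm_sq_orthogonalProjectionOnto_lt_mul_le_exp hv W hdim
  rw [Nat.cast_sub hmn.le] at hbad
  obtain ⟨w, hw, hwEig⟩ := hSigmaeig
  have hlam : 0 ≤ lamSigma :=
    (posSemidef_of_eq_integral_mul hSigma hInt).nonneg_of_mulVec_eq_smul hw hwEig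
  refine le_trans ?_ (measure_mono
    (s := {θ | ‖W.orthogonalProjectionOnto θ‖ ^ 2 < ((m : ℝ) - n) * v / 2}ᶜ) fun θ0 hθ0 t => ?_)
  · calc ENNReal.ofReal (1 - 2 * exp (-((m : ℝ) - n) / 32))
        ≤ ENNReal.ofReal (1 - exp (-((m : ℝ) - n) / 32)) :=
          ENNReal.ofReal_le_ofReal (by linarith [exp_pos (-((m : ℝ) - n) / 32)])
      _ ≤ _ := ofReal_one_sub_le_measure_compl
          (measurableSet_lt (by fun_prop) measurable_const) (exp_nonneg _) hbad
  · rw [Set.mem_compl_iff, Set.mem_ofPred_eq, not_lt] at hθ0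
    have hpow : 0 ≤ (1 - η * lam) ^ (2 * t) := (even_two_mul t).pow_nonneg _
    refine le_trans ?_
      (mul_pow_mul_le_popLoss_gdIter D φmap hSigma hInt hlam hSigmaleast _ η lam θ0 t)
    gcongr

/-- zero teacher, `m > n`, `0 < ηλ < 1`, `θ^{(0)} ∼ N(0, ν²I_m)`. With
probability at least `1 − 2e^{−(m−n)/32}` over `θ^{(0)}`, for every `t`,
`L(θ^{(t)}) ≥ λ_min(Σ)(1 − ηλ)^{2t}(m − n)ν²/2`. -/
theorem zero_teacher_population_loss_lower_bound (d n m : ℕ) (hn : 1 ≤ n) (hmn : n < m)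
    (D : Measure (EuclideanSpace ℝ (Fin d))) [IsProbabilityMeasure D]
    (φmap : EuclideanSpace ℝ (Fin d) → EuclideanSpace ℝ (Fin m))
    (hφmeas : Measurable φmap)
    (xs : Fin n → EuclideanSpace ℝ (Fin d))
    (SigmaMat : Matrix (Fin m) (Fin m) ℝ)
    (hSigma : ∀ j k, SigmaMat j k = ∫ x, φmap x j * φmap x k ∂D)
    (hInt : ∀ j k : Fin m, Integrable (fun x => φmap x j * φmap x k) D)
    (lamSigma : ℝ)
    (hSigmaeig : ∃ w : Fin m → ℝ, w ≠ 0 ∧ SigmaMat.mulVec w = lamSigma • w)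
    (hSigmaleast : ∀ μ : ℝ, (∃ w : Fin m → ℝ, w ≠ 0 ∧ SigmaMat.mulVec w = μ • w) → lamSigma ≤ μ)
    (lam η : ℝ) (hlam : 0 < lam) (hη : 0 < η)
    (hetalam0 : 0 < η * lam) (hetalam1 : η * lam < 1)
    (v : ℝ≥0) (hv : 0 < v) :
    ENNReal.ofReal (1 - 2 * Real.exp (-((m : ℝ) - n) / 32)) ≤
      stdGaussian m v
        {θ0 : EuclideanSpace ℝ (Fin m) | ∀ t : ℕ,
          lamSigma * (1 - η * lam) ^ (2 * t) * (((m : ℝ) - n) * v / 2) ≤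
            popLoss d m D φmap 0
              (gdIter m n (fun i => φmap (xs i)) (fun _ => 0) η lam θ0 t)} :=
  zero_teacher_population_loss_lower_bound_general d n m hmn D φmap xs SigmaMat hSigma hInt lamSigma
    hSigmaeig hSigmaleast lam η v hv
end
end

section
/- Assume the realizable teacher setting (y_i = ⟨θ*, φ_i⟩ for a fixed θ* ∈ ℝ^m), with ‖θ*‖₂ ≤ ‖θ^{(0)}‖₂ and step size η > 0 satisfying η·(λ + λ_max(Φ^⊤Φ)/n) ≤ 1. Then for every t ∈ ℕ, the gradient-descent iterates satisfy L_n(θ^{(t)}) ≤ 2L·(1 − η·λ_min⁺(Φ^⊤Φ)/n − ηλ)^{2t}·‖θ^{(0)}‖₂² + 2λ·(1 − η·λ_min⁺(Φ^⊤Φ)/n − ηλ)^t·‖θ^{(0)}‖₂·‖θ*‖₂ + (λ/2)·‖θ*‖₂². -/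
open MeasureTheory ProbabilityTheory Finset Filter
open scoped RealInnerProductSpace NNReal ENNReal

noncomputable section

lemma closed_form (x : ℕ → ℝ) (r d : ℝ) (h : ∀ s, x (s+1) = r * x s - d) (t : ℕ) :
    x t = r ^ t * x 0 - d * ∑ s ∈ Finset.range t, r ^ s := by
  induction t with
  | zero => simp
  | succ t ih => rw [h t, ih, geom_sum_succ]; ring

set_option maxHeartbeats 1000000 in
lemma core_bound (nr lam η μ lmax c d ρ r S : ℝ) (t : ℕ)
    (hnr : 0 < nr) (hlam : 0 < lam) (hη : 0 < η)
    (hμ0 : 0 < μ) (hμhi : μ ≤ lmax)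
    (hρ0 : 0 ≤ ρ) (hr0 : 0 ≤ r) (hrρ : r ≤ ρ) (hS0 : 0 ≤ S)
    (hSb : S * (1 - r) ≤ 1)
    (hlamle : η * lam ≤ 1 - r) (hmule : η * μ / nr ≤ 1 - r) :
    μ * (r ^ t * c - η*lam*d * S) ^ 2
      ≤ lmax * (ρ ^ t) ^ 2 * c ^ 2
        + 2 * nr * lam * ρ ^ t * |c| * |d|
        + nr * lam * d ^ 2 := by
  have hlmax : 0 < lmax := lt_of_lt_of_le hμ0 hμhi
  have hrt : r ^ t ≤ ρ ^ t := pow_le_pow_left₀ hr0 hrρ t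
  have hrt0 : 0 ≤ r ^ t := pow_nonneg hr0 t
  have hρt : 0 ≤ ρ ^ t := pow_nonneg hρ0 t
  have k2 : η*lam*S ≤ 1 := by
    have h := mul_le_mul_of_nonneg_left hlamle hS0
    linarith
  have k2' : 0 ≤ η*lam*S := by positivity
  have hSμ : S * (η*μ/nr) ≤ 1 := by
    have h := mul_le_mul_of_nonneg_left hmule hS0
    linarith
  have k1 : μ * (η*lam*S) ≤ nr*lam := by
    have h3 := mul_le_mul_of_nonneg_left hSμ (mul_nonneg hnr.le hlam.le)
    have e1 : nr*lam*(S*(η*μ/nr)) = μ*(η*lam*S) := by field_simp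
    linarith [e1 ▸ h3]
  have hA : μ * (r^t)^2 ≤ lmax * (ρ^t)^2 := by
    have hsq : (r^t)^2 ≤ (ρ^t)^2 := pow_le_pow_left₀ hrt0 hrt 2
    exact mul_le_mul hμhi hsq (sq_nonneg _) hlmax.le
  have hcross : μ * r^t * (η*lam*S) ≤ nr*lam*ρ^t := by
    have h1 := mul_le_mul_of_nonneg_right k1 hrt0
    have h2 := mul_le_mul_of_nonneg_left hrt (mul_nonneg hnr.le hlam.le)
    nlinarith [h1, h2]
  have hB : μ * (η*lam*S)^2 ≤ nr*lam := by
    have h1 := mul_le_mul_of_nonneg_right k1 k2'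
    have h2 := mul_le_mul_of_nonneg_left k2 (mul_nonneg hnr.le hlam.le)
    nlinarith [h1, h2]
  have hcd : -(c*d) ≤ |c| * |d| := by rw [← abs_mul]; exact neg_le_abs (c*d)
  have hP : 0 ≤ μ * (r^t * (η*lam*S)) := by positivity
  have expand : μ * (r^t*c - η*lam*d*S)^2
      ≤ μ*(r^t)^2*c^2 + 2*(μ*r^t*(η*lam*S))*(|c| * |d|) + μ*(η*lam*S)^2*d^2 := by
    nlinarith [mul_nonneg hP (by linarith : (0:ℝ) ≤ |c| * |d| + c*d)]
  have b1 : μ*(r^t)^2*c^2 ≤ lmax*(ρ^t)^2*c^2 := mul_le_mul_of_nonneg_right hA (sq_nonneg c)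
  have b2 : 2*(μ*r^t*(η*lam*S))*(|c| * |d|) ≤ 2*(nr*lam*ρ^t)*(|c| * |d|) := by
    have h := mul_le_mul_of_nonneg_right hcross (mul_nonneg (abs_nonneg c) (abs_nonneg d))
    linarith
  have b3 : μ*(η*lam*S)^2*d^2 ≤ nr*lam*d^2 := mul_le_mul_of_nonneg_right hB (sq_nonneg d)
  nlinarith [expand, b1, b2, b3]

lemma scalar_bound (nr lam η μ lmin lmax c d : ℝ)
    (hnr : 0 < nr) (hlam : 0 < lam) (hη : 0 < η) (hlmin : 0 < lmin)
    (hcase : μ = 0 ∨ (lmin ≤ μ ∧ μ ≤ lmax)) (hlml : lmin ≤ lmax)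
    (hstep : η * (lam + lmax / nr) ≤ 1) (t : ℕ) :
    μ * ((1 - η*lam - η*μ/nr) ^ t * c
        - η*lam*d * ∑ s ∈ Finset.range t, (1 - η*lam - η*μ/nr) ^ s) ^ 2
      ≤ lmax * ((1 - η*lmin/nr - η*lam) ^ t) ^ 2 * c ^ 2
        + 2 * nr * lam * (1 - η*lmin/nr - η*lam) ^ t * |c| * |d|
        + nr * lam * d ^ 2 := by
  have hlmax : 0 < lmax := lt_of_lt_of_le hlmin hlml
  have hηlam : 0 < η * lam := mul_pos hη hlam
  have hminmax : η*lmin/nr ≤ η*lmax/nr := by gcongr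
  have hstep' : η*lam + η*lmax/nr ≤ 1 := by
    have e : η * (lam + lmax / nr) = η*lam + η*lmax/nr := by ring
    linarith [e ▸ hstep]
  have hρ0 : 0 ≤ 1 - η*lmin/nr - η*lam := by
    have : 0 < η*lmin/nr := by positivity
    linarith
  rcases hcase with h0 | ⟨hμlo, hμhi⟩
  · subst h0
    have hρt : 0 ≤ (1 - η*lmin/nr - η*lam) ^ t := pow_nonneg hρ0 t
    have t1 : 0 ≤ lmax * ((1 - η*lmin/nr - η*lam)^t)^2 * c^2 :=
      mul_nonneg (mul_nonneg hlmax.le (sq_nonneg _)) (sq_nonneg c)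
    have t2 : 0 ≤ 2*nr*lam*(1 - η*lmin/nr - η*lam)^t * |c| * |d| := by positivity
    have t3 : 0 ≤ nr*lam*d^2 := by positivity
    simp only [zero_mul]
    linarith
  · have hμ0 : 0 < μ := lt_of_lt_of_le hlmin hμlo
    have hμn : η*μ/nr ≤ η*lmax/nr := by gcongr
    have hμn' : η*lmin/nr ≤ η*μ/nr := by gcongr
    have hμnpos : 0 < η*μ/nr := by positivity
    have hr0 : 0 ≤ 1 - η*lam - η*μ/nr := by linarith
    have hrρ : 1 - η*lam - η*μ/nr ≤ 1 - η*lmin/nr - η*lam := by linarith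
    refine core_bound nr lam η μ lmax c d _ _ _ t hnr hlam hη hμ0 hμhi hρ0 hr0 hrρ
      (Finset.sum_nonneg fun s _ => pow_nonneg hr0 s) ?_ (by linarith) (by linarith)
    have h := geom_sum_mul (1 - η*lam - η*μ/nr) t
    have hrt0 : 0 ≤ (1 - η*lam - η*μ/nr) ^ t := pow_nonneg hr0 t
    nlinarith [h]



set_option maxHeartbeats 2000000 in
/-- realizable teacher with `‖θ*‖ ≤ ‖θ^{(0)}‖` and
`η(λ + λ_max(Φ^⊤Φ)/n) ≤ 1`; for every `t`,
`L_n(θ^{(t)}) ≤ 2L·ρ^{2t}‖θ^{(0)}‖² + 2λ·ρ^t‖θ^{(0)}‖‖θ*‖ + (λ/2)‖θ*‖²`, where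
`ρ = 1 − ηλ_min⁺(Φ^⊤Φ)/n − ηλ`. -/
theorem training_loss_three_term_bound (n m : ℕ) (hn : 1 ≤ n) (hm : 1 ≤ m)
    (φ : Fin n → EuclideanSpace ℝ (Fin m)) (θstar : EuclideanSpace ℝ (Fin m))
    (y : Fin n → ℝ) (hy : ∀ i, y i = ⟪θstar, φ i⟫)
    (lam η : ℝ) (hlam : 0 < lam) (hη : 0 < η)
    (lamMinPos : ℝ) (hminpos_pos : 0 < lamMinPos)
    (hminpos_eig : ∃ w : EuclideanSpace ℝ (Fin m), w ≠ 0 ∧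
      ∑ i, ⟪w, φ i⟫ • φ i = lamMinPos • w)
    (hminpos_least : ∀ μ : ℝ, 0 < μ →
      (∃ w : EuclideanSpace ℝ (Fin m), w ≠ 0 ∧ ∑ i, ⟪w, φ i⟫ • φ i = μ • w) →
      lamMinPos ≤ μ)
    (lamMax : ℝ)
    (hmax_eig : ∃ w : EuclideanSpace ℝ (Fin m), w ≠ 0 ∧
      ∑ i, ⟪w, φ i⟫ • φ i = lamMax • w)
    (hmax_greatest : ∀ μ : ℝ,
      (∃ w : EuclideanSpace ℝ (Fin m), w ≠ 0 ∧ ∑ i, ⟪w, φ i⟫ • φ i = μ • w) →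
      μ ≤ lamMax)
    (hstep : η * (lam + lamMax / n) ≤ 1)
    (θ0 : EuclideanSpace ℝ (Fin m)) (hinit : ‖θstar‖ ≤ ‖θ0‖) (t : ℕ) :
    trainLoss m n φ y (gdIter m n φ y η lam θ0 t) ≤
      2 * featNormAvg m n φ * (1 - η * lamMinPos / n - η * lam) ^ (2 * t) * ‖θ0‖ ^ 2 +
        2 * lam * (1 - η * lamMinPos / n - η * lam) ^ t * ‖θ0‖ * ‖θstar‖ +
        lam / 2 * ‖θstar‖ ^ 2 := by
  classical
  have hnr : (0:ℝ) < n := by exact_mod_cast Nat.lt_of_lt_of_le Nat.zero_lt_one hn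
  -- the Gram operator
  set T : EuclideanSpace ℝ (Fin m) →ₗ[ℝ] EuclideanSpace ℝ (Fin m) :=
    { toFun := fun w => ∑ i, ⟪w, φ i⟫ • φ i
      map_add' := fun a c => by
        rw [← Finset.sum_add_distrib]
        refine Finset.sum_congr rfl fun i _ => ?_
        rw [inner_add_left, add_smul]
      map_smul' := fun r a => by
        simp only [RingHom.id_apply]
        rw [Finset.smul_sum]
        refine Finset.sum_congr rfl fun i _ => ?_
        rw [real_inner_smul_left, smul_smul] } with hTdef
  have hTapp : ∀ w, T w = ∑ i, ⟪w, φ i⟫ • φ i := fun w => rfl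
  have hsym : T.IsSymmetric := by
    intro v w
    rw [hTapp, hTapp, sum_inner, inner_sum]
    refine Finset.sum_congr rfl fun i _ => ?_
    rw [real_inner_smul_left, real_inner_smul_right, real_inner_comm (φ i) w]
    ring
  have hfin : Module.finrank ℝ (EuclideanSpace ℝ (Fin m)) = m := finrank_euclideanSpace_fin
  set b := hsym.eigenvectorBasis hfin with hbdef
  set μ := hsym.eigenvalues hfin with hμdef
  have hb : ∀ j, T (b j) = μ j • b j := fun j => hsym.apply_eigenvectorBasis hfin j
  have hbnorm : ∀ j, ‖b j‖ = 1 := fun j => b.orthonormal.1 j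
  -- symmetry in coordinates
  have hTcoord : ∀ j (v : EuclideanSpace ℝ (Fin m)), ⟪b j, T v⟫ = μ j * ⟪b j, v⟫ := by
    intro j v
    rw [← hsym (b j) v, hb j, real_inner_smul_left]
  -- classification of eigenvalues
  have hμclass : ∀ j, μ j = 0 ∨ (lamMinPos ≤ μ j ∧ μ j ≤ lamMax) := by
    intro j
    have hbne : b j ≠ 0 := by
      intro h
      have := hbnorm j
      rw [h, norm_zero] at this
      norm_num at this
    have heig : ∑ i, ⟪b j, φ i⟫ • φ i = μ j • b j := by rw [← hTapp, hb]
    have hle := hmax_greatest (μ j) ⟨b j, hbne, heig⟩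
    have hμnn : 0 ≤ μ j := by
      have h1 : ⟪b j, T (b j)⟫ = μ j := by
        rw [hTcoord j (b j), real_inner_self_eq_norm_sq, hbnorm j]; ring
      have h2 : ⟪b j, T (b j)⟫ = ∑ i, ⟪b j, φ i⟫ ^ 2 := by
        rw [hTapp, inner_sum]
        refine Finset.sum_congr rfl fun i _ => ?_
        rw [real_inner_smul_right]; ring
      rw [← h1, h2]
      exact Finset.sum_nonneg fun i _ => sq_nonneg _
    rcases eq_or_lt_of_le hμnn with h | h
    · exact Or.inl h.symm
    · exact Or.inr ⟨hminpos_least (μ j) h ⟨b j, hbne, heig⟩, hle⟩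
  -- lamMax bounds
  have hlml : lamMinPos ≤ lamMax := hmax_greatest lamMinPos hminpos_eig
  have hlmax : 0 < lamMax := lt_of_lt_of_le hminpos_pos hlml
  have hK0 : 0 ≤ ∑ i, ‖φ i‖ ^ 2 := Finset.sum_nonneg fun i _ => sq_nonneg _
  have hKmax : lamMax ≤ ∑ i, ‖φ i‖ ^ 2 := by
    obtain ⟨w, hw0, hw⟩ := hmax_eig
    have hw2 : 0 < ‖w‖ ^ 2 := pow_pos (norm_pos_iff.mpr hw0) 2
    have h1 : ⟪w, ∑ i, ⟪w, φ i⟫ • φ i⟫ = lamMax * ‖w‖ ^ 2 := by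
      rw [hw, real_inner_smul_right, real_inner_self_eq_norm_sq]
    have h2 : ⟪w, ∑ i, ⟪w, φ i⟫ • φ i⟫ = ∑ i, ⟪w, φ i⟫ ^ 2 := by
      rw [inner_sum]
      exact Finset.sum_congr rfl fun i _ => by rw [real_inner_smul_right]; ring
    have h3 : ∑ i, ⟪w, φ i⟫ ^ 2 ≤ ∑ i, ‖w‖ ^ 2 * ‖φ i‖ ^ 2 := by
      refine Finset.sum_le_sum fun i _ => ?_
      have := abs_real_inner_le_norm w (φ i)
      nlinarith [abs_nonneg ⟪w, φ i⟫, sq_abs ⟪w, φ i⟫]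
    rw [← Finset.mul_sum] at h3
    nlinarith [h1 ▸ h2 ▸ h3]
  -- iterates and error
  set f : ℕ → EuclideanSpace ℝ (Fin m) := gdIter m n φ y η lam θ0 with hfdef
  set e : ℕ → EuclideanSpace ℝ (Fin m) := fun s => f s - θstar with hedef
  -- coordinate recursion
  have hrec : ∀ j s, ⟪b j, e (s+1)⟫ =
      (1 - η*lam - η*(μ j)/n) * ⟪b j, e s⟫ - η*lam*⟪b j, θstar⟫ := by
    intro j s
    have hsum : ∑ i, (⟪f s, φ i⟫ - y i) • φ i = T (e s) := by
      rw [hTapp]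
      refine Finset.sum_congr rfl fun i _ => ?_
      rw [hy i, hedef]
      simp [inner_sub_left]
    have hstep_eq : e (s+1) =
        e s - η • ((n:ℝ)⁻¹ • T (e s) + lam • (e s + θstar)) := by
      have hfs : f (s+1) = gdStep m n φ y η lam (f s) := rfl
      have hfe : f s = e s + θstar := by simp [hedef]
      rw [hedef]
      show f (s+1) - θstar = _
      rw [hfs]
      unfold gdStep
      rw [hsum, hfe]
      module
    rw [hstep_eq]
    rw [inner_sub_right, inner_smul_right, inner_add_right, inner_smul_right,
      inner_smul_right, inner_add_right, hTcoord]
    field_simp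
    ring
  -- closed form for coordinates
  have hclosed : ∀ j, ⟪b j, e t⟫ =
      (1 - η*lam - η*(μ j)/n) ^ t * ⟪b j, e 0⟫
        - η*lam*⟪b j, θstar⟫ * ∑ s ∈ Finset.range t, (1 - η*lam - η*(μ j)/n) ^ s :=
    fun j => closed_form (fun s => ⟪b j, e s⟫) _ _ (hrec j) t
  -- training loss in eigencoordinates
  have hq : ∑ i, (⟪f t, φ i⟫ - y i) ^ 2 = ∑ j, μ j * (⟪b j, e t⟫) ^ 2 := by
    have h1 : ∀ i, ⟪f t, φ i⟫ - y i = ⟪e t, φ i⟫ := by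
      intro i; rw [hy i, hedef]; simp [inner_sub_left]
    have h2 : ∑ i, (⟪f t, φ i⟫ - y i) ^ 2 = ⟪e t, T (e t)⟫ := by
      rw [hTapp, inner_sum]
      refine Finset.sum_congr rfl fun i _ => ?_
      rw [real_inner_smul_right, h1 i]; ring
    have h3 := b.sum_inner_mul_inner (e t) (T (e t))
    rw [h2, ← h3]
    refine Finset.sum_congr rfl fun j _ => ?_
    rw [hTcoord, real_inner_comm (e t) (b j)]
    ring
  -- per-coordinate bound
  have hperj : ∀ j, μ j * (⟪b j, e t⟫) ^ 2 ≤
      lamMax * ((1 - η*lamMinPos/n - η*lam) ^ t) ^ 2 * (⟪b j, e 0⟫) ^ 2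
        + 2 * n * lam * (1 - η*lamMinPos/n - η*lam) ^ t * |⟪b j, e 0⟫| * |⟪b j, θstar⟫|
        + n * lam * (⟪b j, θstar⟫) ^ 2 := by
    intro j
    rw [hclosed j]
    exact scalar_bound n lam η (μ j) lamMinPos lamMax _ _ hnr hlam hη hminpos_pos
      (hμclass j) hlml hstep t
  -- Parseval
  have hpar : ∀ v : EuclideanSpace ℝ (Fin m), ∑ j, (⟪b j, v⟫) ^ 2 = ‖v‖ ^ 2 := by
    intro v
    have h := b.sum_inner_mul_inner v v
    rw [real_inner_self_eq_norm_sq] at h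
    rw [← h]
    exact Finset.sum_congr rfl fun j _ => by rw [real_inner_comm v (b j)]; ring
  -- Cauchy–Schwarz for the cross sum
  have hcs : ∑ j, |⟪b j, e 0⟫| * |⟪b j, θstar⟫| ≤ ‖e 0‖ * ‖θstar‖ := by
    have h := Finset.sum_mul_sq_le_sq_mul_sq Finset.univ
      (fun j => |⟪b j, e 0⟫|) (fun j => |⟪b j, θstar⟫|)
    simp only [sq_abs] at h
    rw [hpar (e 0), hpar θstar] at h
    have h0 : 0 ≤ ∑ j, |⟪b j, e 0⟫| * |⟪b j, θstar⟫| :=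
      Finset.sum_nonneg fun j _ => mul_nonneg (abs_nonneg _) (abs_nonneg _)
    have h' : (∑ j, |⟪b j, e 0⟫| * |⟪b j, θstar⟫|) ^ 2 ≤ (‖e 0‖ * ‖θstar‖) ^ 2 := by
      rw [mul_pow]; exact h
    exact (pow_le_pow_iff_left₀ h0 (mul_nonneg (norm_nonneg _) (norm_nonneg _))
      two_ne_zero).mp h' 
  have hE : ‖e 0‖ ≤ 2 * ‖θ0‖ := by
    have he0 : e 0 = θ0 - θstar := by rw [hedef]; rfl
    rw [he0]
    calc ‖θ0 - θstar‖ ≤ ‖θ0‖ + ‖θstar‖ := norm_sub_le _ _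
    _ ≤ 2 * ‖θ0‖ := by linarith
  -- nonnegativity of contraction factor
  have hminmax : η*lamMinPos/n ≤ η*lamMax/n := by gcongr
  have hstep' : η*lam + η*lamMax/(n:ℝ) ≤ 1 := by
    have e2 : η * (lam + lamMax / (n:ℝ)) = η*lam + η*lamMax/n := by ring
    linarith [e2 ▸ hstep]
  have hρ0 : 0 ≤ 1 - η*lamMinPos/n - η*lam := by
    have h5 : 0 < η*lamMinPos/(n:ℝ) := by positivity
    linarith
  have hR0 : 0 ≤ (1 - η*lamMinPos/(n:ℝ) - η*lam) ^ t := pow_nonneg hρ0 t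
  -- sum the per-coordinate bounds
  have hsplit : ∑ j, (lamMax * ((1 - η*lamMinPos/n - η*lam) ^ t) ^ 2 * (⟪b j, e 0⟫) ^ 2
        + 2 * n * lam * (1 - η*lamMinPos/n - η*lam) ^ t * |⟪b j, e 0⟫| * |⟪b j, θstar⟫|
        + n * lam * (⟪b j, θstar⟫) ^ 2)
      = lamMax * ((1 - η*lamMinPos/n - η*lam) ^ t) ^ 2 * (∑ j, (⟪b j, e 0⟫) ^ 2)
        + 2 * n * lam * (1 - η*lamMinPos/n - η*lam) ^ t
            * (∑ j, |⟪b j, e 0⟫| * |⟪b j, θstar⟫|)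
        + n * lam * (∑ j, (⟪b j, θstar⟫) ^ 2) := by
    rw [Finset.sum_add_distrib, Finset.sum_add_distrib, Finset.mul_sum, Finset.mul_sum,
      Finset.mul_sum]
    refine congrArg₂ _ (congrArg₂ _ ?_ ?_) ?_ <;>
      exact Finset.sum_congr rfl fun j _ => by ring
  have hsum2 : ∑ j, μ j * (⟪b j, e t⟫) ^ 2
      ≤ lamMax * ((1 - η*lamMinPos/n - η*lam) ^ t) ^ 2 * ‖e 0‖ ^ 2
        + 2 * n * lam * (1 - η*lamMinPos/n - η*lam) ^ t * (‖e 0‖ * ‖θstar‖)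
        + n * lam * ‖θstar‖ ^ 2 := by
    have h1 := Finset.sum_le_sum fun j (_ : j ∈ Finset.univ) => hperj j
    rw [hsplit, hpar (e 0), hpar θstar] at h1
    have hc : (0:ℝ) ≤ 2 * n * lam * (1 - η*lamMinPos/n - η*lam) ^ t := by positivity
    have h2 := mul_le_mul_of_nonneg_left hcs hc
    linarith
  -- assemble
  have hloss : trainLoss m n φ y (f t) = 1/(2*(n:ℝ)) * ∑ j, μ j * (⟪b j, e t⟫) ^ 2 := by
    rw [trainLoss, hq]
  rw [hloss]
  have hhalf : (0:ℝ) ≤ 1/(2*(n:ℝ)) := by positivity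
  calc 1/(2*(n:ℝ)) * ∑ j, μ j * (⟪b j, e t⟫) ^ 2
      ≤ 1/(2*(n:ℝ)) * (lamMax * ((1 - η*lamMinPos/n - η*lam) ^ t) ^ 2 * ‖e 0‖ ^ 2
        + 2 * n * lam * (1 - η*lamMinPos/n - η*lam) ^ t * (‖e 0‖ * ‖θstar‖)
        + n * lam * ‖θstar‖ ^ 2) := mul_le_mul_of_nonneg_left hsum2 hhalf
    _ ≤ 2 * featNormAvg m n φ * (1 - η * lamMinPos / n - η * lam) ^ (2 * t) * ‖θ0‖ ^ 2 +
        2 * lam * (1 - η * lamMinPos / n - η * lam) ^ t * ‖θ0‖ * ‖θstar‖ +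
        lam / 2 * ‖θstar‖ ^ 2 := by
      rw [featNormAvg, mul_comm 2 t, pow_mul]
      have hE2 : ‖e 0‖ ^ 2 ≤ 4 * ‖θ0‖ ^ 2 := by nlinarith [norm_nonneg (e 0)]
      have hE0 : 0 ≤ ‖e 0‖ := norm_nonneg _
      have hS0 : 0 ≤ ‖θstar‖ := norm_nonneg _
      have hP0 : 0 ≤ ‖θ0‖ := norm_nonneg _
      have hRsq : (0:ℝ) ≤ ((1 - η*lamMinPos/(n:ℝ) - η*lam) ^ t) ^ 2 := sq_nonneg _
      have key : lamMax * ((1 - η*lamMinPos/n - η*lam) ^ t) ^ 2 * ‖e 0‖ ^ 2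
            + 2 * n * lam * (1 - η*lamMinPos/n - η*lam) ^ t * (‖e 0‖ * ‖θstar‖)
            + n * lam * ‖θstar‖ ^ 2
          ≤ 4 * (∑ i, ‖φ i‖ ^ 2) * ((1 - η*lamMinPos/n - η*lam) ^ t) ^ 2 * ‖θ0‖ ^ 2
            + 4 * n * lam * (1 - η*lamMinPos/n - η*lam) ^ t * (‖θ0‖ * ‖θstar‖)
            + n * lam * ‖θstar‖ ^ 2 := by
        have b1 : lamMax * ((1 - η*lamMinPos/n - η*lam) ^ t) ^ 2 * ‖e 0‖ ^ 2
            ≤ (∑ i, ‖φ i‖ ^ 2) * ((1 - η*lamMinPos/n - η*lam) ^ t) ^ 2 * (4 * ‖θ0‖ ^ 2) :=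
          mul_le_mul (mul_le_mul_of_nonneg_right hKmax hRsq) hE2 (sq_nonneg _)
            (mul_nonneg hK0 hRsq)
        have b2 : ‖e 0‖ * ‖θstar‖ ≤ 2 * ‖θ0‖ * ‖θstar‖ :=
          mul_le_mul_of_nonneg_right hE hS0
        have hc : (0:ℝ) ≤ 2 * n * lam * (1 - η*lamMinPos/n - η*lam) ^ t := by positivity
        nlinarith [mul_le_mul_of_nonneg_left b2 hc]
      have heq : 2 * ((1/(n:ℝ)) * ∑ i, ‖φ i‖ ^ 2) * ((1 - η*lamMinPos/n - η*lam) ^ t) ^ 2 * ‖θ0‖ ^ 2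
            + 2 * lam * (1 - η*lamMinPos/n - η*lam) ^ t * ‖θ0‖ * ‖θstar‖
            + lam / 2 * ‖θstar‖ ^ 2
          = 1/(2*(n:ℝ)) * (4 * (∑ i, ‖φ i‖ ^ 2) * ((1 - η*lamMinPos/n - η*lam) ^ t) ^ 2 * ‖θ0‖ ^ 2
            + 4 * n * lam * (1 - η*lamMinPos/n - η*lam) ^ t * (‖θ0‖ * ‖θstar‖)
            + n * lam * ‖θstar‖ ^ 2) := by
        field_simp
        ring
      rw [heq]
      exact mul_le_mul_of_nonneg_left key hhalf



end
end

section
/- Assume the realizable teacher setting (labels y_i = ⟨θ*, φ(x_i)⟩ for a fixed θ* ∈ ℝ^m) and 0 < ηλ < 1. Then for every initialization θ^{(0)} ∈ ℝ^m and every t ∈ ℕ, the gradient-descent iterates satisfy ‖θ^{(t)} − θ*‖₂ ≥ (1 − ηλ)^t·‖θ_⊥^{(0)}‖₂ − ‖θ*‖₂; consequently, whenever (1 − ηλ)^t·‖θ_⊥^{(0)}‖₂ ≥ ‖θ*‖₂, the population loss satisfies L(θ^{(t)}) ≥ λ_min(Σ)·((1 − ηλ)^t·‖θ_⊥^{(0)}‖₂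 − ‖θ*‖₂)². -/
open MeasureTheory ProbabilityTheory Finset Filter
open scoped RealInnerProductSpace NNReal ENNReal

noncomputable section

/-! Every gradient of the training loss is a combination of the features `φᵢ`, so on the
orthogonal complement `K` of their span a gradient step is pure weight decay
`θ ↦ (1 - ηλ) θ`. Hence `‖θ^{(t)}‖ ≥ ‖P_K θ^{(t)}‖ = |1 - ηλ|^t ‖P_K θ^{(0)}‖`, and the triangle
inequality gives the distance bound. The population loss is the quadratic form of `Σ` at
`θ^{(t)} - θ*`, which is at least `λ_min(Σ) ‖θ^{(t)} - θ*‖²`. -/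

namespace GradientDescent

variable {m n : ℕ} (φ : Fin n → EuclideanSpace ℝ (Fin m)) (y : Fin n → ℝ) (η lam : ℝ)

local notation "P⊥[" φ "]" =>
  Submodule.orthogonalProjectionOnto (Submodule.span ℝ (Set.range φ))ᗮ

theorem orthogonalProjectionOnto_gdStep (θ : EuclideanSpace ℝ (Fin m)) :
    P⊥[φ] (gdStep m n φ y η lam θ) = (1 - η * lam) • P⊥[φ] θ := by
  have hgrad : P⊥[φ] (∑ i, (⟪θ, φ i⟫ - y i) • φ i) = 0 :=
    Submodule.orthogonalProjectionOnto_orthogonal_apply_eq_zero <|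
      Submodule.sum_smul_mem _ _ fun i _ => Submodule.subset_span ⟨i, rfl⟩
  simp only [gdStep, map_sub, map_add, map_smul, hgrad, smul_zero, zero_add]
  module

theorem orthogonalProjectionOnto_gdIter (θ0 : EuclideanSpace ℝ (Fin m)) (t : ℕ) :
    P⊥[φ] (gdIter m n φ y η lam θ0 t) = (1 - η * lam) ^ t • P⊥[φ] θ0 := by
  induction t with
  | zero => simp [gdIter.eq_1]
  | succ t ih => rw [gdIter.eq_2, orthogonalProjectionOnto_gdStep, ih, smul_smul, pow_succ']

theorem pow_mul_norm_orthogonalProjectionOnto_sub_norm_le (θ0 θstar : EuclideanSpace ℝ (Fin m))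
    (t : ℕ) :
    (1 - η * lam) ^ t * ‖(P⊥[φ] θ0 : EuclideanSpace ℝ (Fin m))‖ - ‖θstar‖ ≤
      ‖gdIter m n φ y η lam θ0 t - θstar‖ := by
  have hproj : (1 - η * lam) ^ t * ‖(P⊥[φ] θ0 : EuclideanSpace ℝ (Fin m))‖ ≤
      ‖gdIter m n φ y η lam θ0 t‖ :=
    calc (1 - η * lam) ^ t * ‖(P⊥[φ] θ0 : EuclideanSpace ℝ (Fin m))‖
        ≤ ‖(1 - η * lam) ^ t • P⊥[φ] θ0‖ := by
          rw [norm_smul, Real.norm_eq_abs, Submodule.coe_norm]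
          gcongr
          exact le_abs_self _
      _ = ‖P⊥[φ] (gdIter m n φ y η lam θ0 t)‖ := by rw [orthogonalProjectionOnto_gdIter]
      _ ≤ ‖gdIter m n φ y η lam θ0 t‖ := Submodule.norm_orthogonalProjectionOnto_apply_le _ _
  linarith [norm_sub_norm_le (gdIter m n φ y η lam θ0 t) θstar]

end GradientDescent

namespace Matrix

variable {ι : Type*} [Fintype ι] {A : Matrix ι ι ℝ} {c : ℝ}

theorem IsHermitian.posSemidef_sub_smul_one [DecidableEq ι] (hA : A.IsHermitian)
    (hc : ∀ μ : ℝ, (∃ w : ι → ℝ, w ≠ 0 ∧ A *ᵥ w = μ • w) → c ≤ μ) :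
    (A - c • 1).PosSemidef := by
  have hB : (A - c • 1).IsHermitian := hA.sub (isHermitian_one.smul (IsSelfAdjoint.all c))
  refine hB.posSemidef_iff_eigenvalues_nonneg.mpr fun i => ?_
  set v := (hB.eigenvectorBasis i).ofLp
  have hv : v ≠ 0 := (WithLp.ofLp_eq_zero 2).ne.2 (hB.eigenvectorBasis.orthonormal.ne_zero i)
  have hAv : A *ᵥ v = (hB.eigenvalues i + c) • v := by
    have := hB.mulVec_eigenvectorBasis i
    rw [sub_mulVec, smul_mulVec, one_mulVec] at this
    rw [add_smul, ← this, sub_add_cancel]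
  simpa using hc _ ⟨v, hv, hAv⟩

theorem IsHermitian.mul_dotProduct_self_le_dotProduct_mulVec (hA : A.IsHermitian)
    (hc : ∀ μ : ℝ, (∃ w : ι → ℝ, w ≠ 0 ∧ A *ᵥ w = μ • w) → c ≤ μ) (v : ι → ℝ) :
    c * (v ⬝ᵥ v) ≤ v ⬝ᵥ A *ᵥ v := by
  classical
  have := (hA.posSemidef_sub_smul_one hc).dotProduct_mulVec_nonneg v
  rw [star_trivial, sub_mulVec, smul_mulVec, one_mulVec, dotProduct_sub, dotProduct_smul,
    smul_eq_mul] at this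
  linarith

end Matrix

section SecondMoment

open Matrix

variable {α ι : Type*} [MeasurableSpace α] {μ : Measure α} {f : α → EuclideanSpace ℝ ι}
  {A : Matrix ι ι ℝ}

theorem Matrix.isHermitian_of_eq_integral_mul (hA : ∀ j k, A j k = ∫ x, f x j * f x k ∂μ) :
    A.IsHermitian := by
  ext j k
  simp only [conjTranspose_apply, star_trivial, hA, mul_comm]

theorem integral_inner_sq_eq_dotProduct_mulVec [Fintype ι]
    (hA : ∀ j k, A j k = ∫ x, f x j * f x k ∂μ)
    (hf : ∀ j k, Integrable (fun x => f x j * f x k) μ) (v : EuclideanSpace ℝ ι) :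
    ∫ x, ⟪v, f x⟫ ^ 2 ∂μ = v.ofLp ⬝ᵥ A *ᵥ v.ofLp := by
  have hexpand : ∀ x, ⟪v, f x⟫ ^ 2 = ∑ j, ∑ k, v j * v k * (f x j * f x k) := by
    intro x
    simp only [EuclideanSpace.inner_eq_star_dotProduct, star_trivial, dotProduct, sq,
      Finset.sum_mul_sum]
    exact Finset.sum_congr rfl fun j _ => Finset.sum_congr rfl fun k _ => by ring
  simp only [hexpand, dotProduct, mulVec, Finset.mul_sum]
  rw [integral_finsetSum _ fun j _ => integrable_finsetSum _ fun k _ => (hf j k).const_mul _]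
  refine Finset.sum_congr rfl fun j _ => ?_
  rw [integral_finsetSum _ fun k _ => (hf j k).const_mul _]
  refine Finset.sum_congr rfl fun k _ => ?_
  rw [integral_const_mul, hA]
  ring

end SecondMoment

open Matrix GradientDescent in
theorem distance_and_population_loss_lower_bound_general (d n m : ℕ)
    (D : Measure (EuclideanSpace ℝ (Fin d)))
    (φmap : EuclideanSpace ℝ (Fin d) → EuclideanSpace ℝ (Fin m))
    (xs : Fin n → EuclideanSpace ℝ (Fin d))
    (θstar : EuclideanSpace ℝ (Fin m))
    (SigmaMat : Matrix (Fin m) (Fin m) ℝ)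
    (hSigma : ∀ j k, SigmaMat j k = ∫ x, φmap x j * φmap x k ∂D)
    (hInt : ∀ j k : Fin m, Integrable (fun x => φmap x j * φmap x k) D)
    (lamSigma : ℝ)
    (hSigmaleast : ∀ μ : ℝ, (∃ w : Fin m → ℝ, w ≠ 0 ∧ SigmaMat.mulVec w = μ • w) → lamSigma ≤ μ)
    (lam η : ℝ)
    (θ0 : EuclideanSpace ℝ (Fin m)) (t : ℕ) :
    (1 - η * lam) ^ t *
        ‖(Submodule.orthogonalProjection (Submodule.span ℝ (Set.range fun i => φmap (xs i)))ᗮ θ0 :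
            EuclideanSpace ℝ (Fin m))‖ - ‖θstar‖ ≤
      ‖gdIter m n (fun i => φmap (xs i)) (fun i => ⟪θstar, φmap (xs i)⟫) η lam θ0 t -
          θstar‖ ∧
    (‖θstar‖ ≤ (1 - η * lam) ^ t *
        ‖(Submodule.orthogonalProjection (Submodule.span ℝ (Set.range fun i => φmap (xs i)))ᗮ θ0 :
            EuclideanSpace ℝ (Fin m))‖ →
      lamSigma * ((1 - η * lam) ^ t *
          ‖(Submodule.orthogonalProjection
              (Submodule.span ℝ (Set.range fun i => φmap (xs i)))ᗮ θ0 :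
              EuclideanSpace ℝ (Fin m))‖ - ‖θstar‖) ^ 2 ≤
        popLoss d m D φmap θstar
          (gdIter m n (fun i => φmap (xs i))
            (fun i => ⟪θstar, φmap (xs i)⟫) η lam θ0 t)) := by
  set θt := gdIter m n (fun i => φmap (xs i)) (fun i => ⟪θstar, φmap (xs i)⟫) η lam θ0 t
  have hdist := pow_mul_norm_orthogonalProjectionOnto_sub_norm_le (fun i => φmap (xs i))
    (fun i => ⟪θstar, φmap (xs i)⟫) η lam θ0 θstar t
  refine ⟨hdist, fun hge => ?_⟩
  have hloss :
      popLoss d m D φmap θstar θt = (θt - θstar).ofLp ⬝ᵥ SigmaMat *ᵥ (θt - θstar).ofLp :=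
    integral_inner_sq_eq_dotProduct_mulVec hSigma hInt _
  rcases le_or_gt lamSigma 0 with hneg | hpos
  · calc _ ≤ (0 : ℝ) := mul_nonpos_of_nonpos_of_nonneg hneg (sq_nonneg _)
      _ ≤ _ := integral_nonneg fun _ => sq_nonneg _
  · calc _ ≤ lamSigma * ‖θt - θstar‖ ^ 2 := by gcongr
      _ = lamSigma * ((θt - θstar).ofLp ⬝ᵥ (θt - θstar).ofLp) := by
          rw [← real_inner_self_eq_norm_sq, EuclideanSpace.inner_eq_star_dotProduct, star_trivial]
      _ ≤ _ := (isHermitian_of_eq_integral_mul hSigma).mul_dotProduct_self_le_dotProduct_mulVec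
          hSigmaleast _
      _ = _ := hloss.symm

/-- realizable teacher, `0 < ηλ < 1`; for every initialization and `t`,
`‖θ^{(t)} − θ*‖ ≥ (1 − ηλ)^t‖θ_⊥^{(0)}‖ − ‖θ*‖`; consequently, whenever
`(1 − ηλ)^t‖θ_⊥^{(0)}‖ ≥ ‖θ*‖`, the population loss satisfies
`L(θ^{(t)}) ≥ λ_min(Σ)((1 − ηλ)^t‖θ_⊥^{(0)}‖ − ‖θ*‖)²`. -/
theorem distance_and_population_loss_lower_bound (d n m : ℕ) (hn : 1 ≤ n) (hm : 1 ≤ m)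
    (D : Measure (EuclideanSpace ℝ (Fin d))) [IsProbabilityMeasure D]
    (φmap : EuclideanSpace ℝ (Fin d) → EuclideanSpace ℝ (Fin m))
    (hφmeas : Measurable φmap)
    (xs : Fin n → EuclideanSpace ℝ (Fin d))
    (θstar : EuclideanSpace ℝ (Fin m))
    (SigmaMat : Matrix (Fin m) (Fin m) ℝ)
    (hSigma : ∀ j k, SigmaMat j k = ∫ x, φmap x j * φmap x k ∂D)
    (hInt : ∀ j k : Fin m, Integrable (fun x => φmap x j * φmap x k) D)
    (lamSigma : ℝ)
    (hSigmaeig : ∃ w : Fin m → ℝ, w ≠ 0 ∧ SigmaMat.mulVec w = lamSigma • w)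
    (hSigmaleast : ∀ μ : ℝ, (∃ w : Fin m → ℝ, w ≠ 0 ∧ SigmaMat.mulVec w = μ • w) → lamSigma ≤ μ)
    (lam η : ℝ) (hlam : 0 < lam) (hη : 0 < η)
    (hetalam0 : 0 < η * lam) (hetalam1 : η * lam < 1)
    (θ0 : EuclideanSpace ℝ (Fin m)) (t : ℕ) :
    (1 - η * lam) ^ t *
        ‖(Submodule.orthogonalProjection (Submodule.span ℝ (Set.range fun i => φmap (xs i)))ᗮ θ0 :
            EuclideanSpace ℝ (Fin m))‖ - ‖θstar‖ ≤
      ‖gdIter m n (fun i => φmap (xs i)) (fun i => ⟪θstar, φmap (xs i)⟫) η lam θ0 t -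
          θstar‖ ∧
    (‖θstar‖ ≤ (1 - η * lam) ^ t *
        ‖(Submodule.orthogonalProjection (Submodule.span ℝ (Set.range fun i => φmap (xs i)))ᗮ θ0 :
            EuclideanSpace ℝ (Fin m))‖ →
      lamSigma * ((1 - η * lam) ^ t *
          ‖(Submodule.orthogonalProjection
              (Submodule.span ℝ (Set.range fun i => φmap (xs i)))ᗮ θ0 :
              EuclideanSpace ℝ (Fin m))‖ - ‖θstar‖) ^ 2 ≤
        popLoss d m D φmap θstar
          (gdIter m n (fun i => φmap (xs i))
            (fun i => ⟪θstar, φmap (xs i)⟫) η lam θ0 t)) :=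
  distance_and_population_loss_lower_bound_general d n m D φmap xs θstar SigmaMat hSigma hInt
    lamSigma hSigmaleast lam η θ0 t

end
end
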